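/- arXiv:1503.06164 — 2 statements merged into one kernel-verified Lean document; each statement's English description precedes it below -/
import Mathlib

section
/- Let G be a finite abelian group with |G| ≥ 3 and let k be a positive integer. Then ρ_{2k}(G) = k·D(G), and 1 + k·D(G) ≤ ρ_{2k+1}(G) ≤ k·D(G) + ⌊D(G)/2⌋. In particular, if D(G) = 3, then ρ_{2k+1}(G) = 3k + 1. -/
/-- A minimal zero-sum sequence (atom) over `G`: a nontrivial multiset summing to zero,
no proper nontrivial sub-multiset of which sums to zero. -/
def MinZeroSum {G : Type*} [AddCommGroup G] (S : Multiset G) : Prop :=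
  S ≠ 0 ∧ S.sum = 0 ∧ ∀ T : Multiset G, T ≤ S → T ≠ 0 → T ≠ S → T.sum ≠ 0

/-- `rho G k` is the largest `m` such that some product of `k` atoms over `G`
equals a product of `m` atoms. -/
noncomputable def rho (G : Type*) [AddCommGroup G] (k : ℕ) : ℕ :=
  sSup {m : ℕ | ∃ (U : Fin k → Multiset G) (V : Fin m → Multiset G),
    (∀ i, MinZeroSum (U i)) ∧ (∀ j, MinZeroSum (V j)) ∧
    (∑ i, U i) = (∑ j, V j)}

/-- The Davenport constant of `G`: the maximal length of a minimal zero-sum sequence. -/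
noncomputable def DavC (G : Type*) [AddCommGroup G] : ℕ :=
  sSup {l : ℕ | ∃ S : Multiset G, MinZeroSum S ∧ Multiset.card S = l}

/-!
Weigh a sequence `S` by `|S| + v₀(S)`, its length plus the multiplicity of `0`; this weight is
additive. Every atom weighs at least `2`, and at most `D(G)` once `D(G) ≥ 2` (the atom `0` weighs
`2`), so if a product of `k` atoms is also a product of `m` atoms then `2m ≤ k D(G)`. Conversely,
for an atom `W` of length `D(G)` the sequence `W (-W)` is the product of the two atoms `W`, `-W`
and of the `D(G)` atoms `x (-x)` with `x ∈ W`; taking `k` copies, together with the atom `0` in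
the odd case, gives the lower bounds.
-/

open Multiset

section Atoms

variable {G : Type*} [AddCommGroup G]

lemma minZeroSum_singleton_zero : MinZeroSum ({0} : Multiset G) :=
  ⟨singleton_ne_zero 0, sum_singleton 0, fun _ hT hT0 hTS _ =>
    hTS ((le_singleton.mp hT).resolve_left hT0)⟩

lemma minZeroSum_pair {g : G} (hg : g ≠ 0) : MinZeroSum ({g, -g} : Multiset G) := by
  refine ⟨cons_ne_zero, by simp, fun T hT hT0 hTS hTsum => ?_⟩
  have hcard : card T = 1 := by
    have hlt := card_lt_card (lt_of_le_of_ne hT hTS)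
    have hpos := card_pos.mpr hT0
    simp only [insert_eq_cons, card_cons, card_singleton] at hlt
    omega
  obtain ⟨a, rfl⟩ := card_eq_one.mp hcard
  have ha : a ∈ ({g, -g} : Multiset G) := singleton_le.mp hT
  rw [sum_singleton] at hTsum
  simp [hTsum, eq_comm, hg] at ha

lemma MinZeroSum.map_addEquiv {H : Type*} [AddCommGroup H] (e : G ≃+ H) {S : Multiset G}
    (hS : MinZeroSum S) : MinZeroSum (S.map e) := by
  obtain ⟨hS0, hSsum, hSmin⟩ := hS
  refine ⟨by simpa using hS0, by rw [← map_multiset_sum, hSsum, _root_.map_zero],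
    fun T hT hT0 hTS hTsum => hSmin (T.map e.symm) ?_ (by simpa using hT0) ?_ ?_⟩
  · simpa [map_map] using map_le_map (f := e.symm) hT
  · rintro rfl
    exact hTS (by simp [map_map])
  · rw [← map_multiset_sum, hTsum, _root_.map_zero]

lemma MinZeroSum.eq_singleton_zero_of_zero_mem {S : Multiset G} (hS : MinZeroSum S)
    (h0 : (0 : G) ∈ S) : S = {0} := by
  by_contra hne
  exact hS.2.2 {0} (singleton_le.mpr h0) (singleton_ne_zero 0) (Ne.symm hne) (sum_singleton 0)

lemma MinZeroSum.two_le_card_add_count_zero [DecidableEq G] {S : Multiset G}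
    (hS : MinZeroSum S) : 2 ≤ card S + count 0 S := by
  by_cases h0 : (0 : G) ∈ S
  · simp [hS.eq_singleton_zero_of_zero_mem h0]
  · have hne : card S ≠ 1 := fun h1 => by
      obtain ⟨a, rfl⟩ := card_eq_one.mp h1
      exact h0 (by simpa using hS.2.1.symm)
    have := card_pos.mpr hS.1
    omega

end Atoms

section Davenport

variable {G : Type*} [AddCommGroup G] [Finite G]

lemma exists_le_sum_eq_zero_of_natCard_le {S : Multiset G} (hS : Nat.card G ≤ card S) :
    ∃ T ≤ S, T ≠ 0 ∧ T.sum = 0 := by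
  have := Fintype.ofFinite G
  obtain ⟨l, rfl⟩ : ∃ l : List G, (l : Multiset G) = S := Quot.exists_rep S
  -- two of the `|S| + 1` prefix sums coincide; the segment between them sums to `0`
  obtain ⟨i, j, hij, hsum⟩ := Fintype.exists_ne_map_eq_of_card_lt
    (fun i : Fin (l.length + 1) => (l.take i).sum)
    (by simp only [Nat.card_eq_fintype_card, coe_card] at hS; simp only [Fintype.card_fin]; omega)
  wlog hlt : i < j generalizing i j
  · exact this j i hij.symm hsum.symm (lt_of_le_of_ne (not_lt.mp hlt) hij.symm)
  have hsplit : l.take i ++ (l.take j).drop i = l.take j := by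
    simpa [List.take_take, min_eq_left (Fin.le_iff_val_le_val.mp hlt.le)] using
      List.take_append_drop i (l.take j)
  refine ⟨((l.take j).drop i : List G), coe_le.mpr ?_, ?_, ?_⟩
  · exact ((List.drop_sublist _ _).trans (List.take_sublist _ _)).subperm
  · simp only [ne_eq, coe_eq_zero, List.drop_eq_nil_iff, List.length_take]
    omega
  · have := congrArg List.sum hsplit
    simp only [List.sum_append] at this
    simpa [← hsum] using this

lemma MinZeroSum.card_le_natCard {S : Multiset G} (hS : MinZeroSum S) : card S ≤ Nat.card G := by
  classical
  by_contra! h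
  obtain ⟨a, ha⟩ := card_pos_iff_exists_mem.mp (Nat.zero_lt_of_lt h)
  obtain ⟨T, hT, hT0, hTsum⟩ := exists_le_sum_eq_zero_of_natCard_le (S := S.erase a)
    (by rw [card_erase_of_mem ha, Nat.pred_eq_sub_one]; omega)
  exact hS.2.2 T (hT.trans (erase_le a S)) hT0 (hT.trans_lt (erase_lt.mpr ha)).ne hTsum

lemma bddAbove_setOf_card_minZeroSum :
    BddAbove {l : ℕ | ∃ S : Multiset G, MinZeroSum S ∧ card S = l} :=
  ⟨Nat.card G, by rintro _ ⟨S, hS, rfl⟩; exact hS.card_le_natCard⟩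

lemma MinZeroSum.card_le_davC {S : Multiset G} (hS : MinZeroSum S) : card S ≤ DavC G :=
  le_csSup bddAbove_setOf_card_minZeroSum ⟨S, hS, rfl⟩

lemma exists_minZeroSum_card_eq_davC : ∃ S : Multiset G, MinZeroSum S ∧ card S = DavC G :=
  Nat.sSup_mem (s := {l | ∃ S : Multiset G, MinZeroSum S ∧ card S = l})
    ⟨1, {0}, minZeroSum_singleton_zero, card_singleton 0⟩ bddAbove_setOf_card_minZeroSum

lemma two_le_davC [Nontrivial G] : 2 ≤ DavC G := by
  obtain ⟨g, hg⟩ := exists_ne (0 : G)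
  simpa using (minZeroSum_pair hg).card_le_davC

lemma MinZeroSum.card_add_count_zero_le_davC [DecidableEq G] {S : Multiset G}
    (hS : MinZeroSum S) (hD : 2 ≤ DavC G) : card S + count 0 S ≤ DavC G := by
  by_cases h0 : (0 : G) ∈ S
  · simpa [hS.eq_singleton_zero_of_zero_mem h0] using hD
  · simpa [count_eq_zero_of_notMem h0] using hS.card_le_davC

end Davenport

section Factorization

variable {G : Type*} [AddCommGroup G]

def HasFactorizationOfLength (S : Multiset G) (m : ℕ) : Prop :=
  ∃ V : Fin m → Multiset G, (∀ j, MinZeroSum (V j)) ∧ ∑ j, V j = S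

lemma rho_eq_sSup (k : ℕ) : rho G k = sSup {m | ∃ S : Multiset G,
    HasFactorizationOfLength S k ∧ HasFactorizationOfLength S m} := by
  unfold rho
  congr 1
  ext m
  constructor
  · rintro ⟨U, V, hU, hV, hUV⟩
    exact ⟨_, ⟨U, hU, rfl⟩, V, hV, hUV.symm⟩
  · rintro ⟨S, ⟨U, hU, rfl⟩, V, hV, hVS⟩
    exact ⟨U, V, hU, hV, hVS.symm⟩

lemma hasFactorizationOfLength_zero : HasFactorizationOfLength (0 : Multiset G) 0 :=
  ⟨Fin.elim0, fun j => j.elim0, rfl⟩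

lemma MinZeroSum.hasFactorizationOfLength_one {A : Multiset G} (hA : MinZeroSum A) :
    HasFactorizationOfLength A 1 :=
  ⟨fun _ => A, fun _ => hA, by simp⟩

lemma HasFactorizationOfLength.add {S T : Multiset G} {m n : ℕ}
    (hS : HasFactorizationOfLength S m) (hT : HasFactorizationOfLength T n) :
    HasFactorizationOfLength (S + T) (m + n) := by
  obtain ⟨V, hV, rfl⟩ := hS
  obtain ⟨W, hW, rfl⟩ := hT
  exact ⟨Fin.append V W, Fin.addCases (by simpa using hV) (by simpa using hW),
    by simp [Fin.sum_univ_add]⟩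

lemma HasFactorizationOfLength.nsmul {S : Multiset G} {m : ℕ}
    (h : HasFactorizationOfLength S m) (n : ℕ) : HasFactorizationOfLength (n • S) (n * m) := by
  induction n with
  | zero => simpa using hasFactorizationOfLength_zero
  | succ n ih => simpa [succ_nsmul, add_mul] using ih.add h

lemma hasFactorizationOfLength_add_map_neg {W : Multiset G} (hW : ∀ x ∈ W, x ≠ 0) :
    HasFactorizationOfLength (W + W.map Neg.neg) (card W) := by
  induction W using Multiset.induction_on with
  | empty => simpa using hasFactorizationOfLength_zero
  | cons a W ih =>
    have h := (minZeroSum_pair (hW a (mem_cons_self a W))).hasFactorizationOfLength_one.add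
      (ih fun x hx => hW x (mem_cons_of_mem hx))
    rw [map_cons, card_cons, add_comm (card W)]
    convert h using 1
    simp only [insert_eq_cons, ← singleton_add]
    abel

lemma HasFactorizationOfLength.two_mul_le [DecidableEq G] {S : Multiset G} {m : ℕ}
    (h : HasFactorizationOfLength S m) : 2 * m ≤ card S + count 0 S := by
  obtain ⟨V, hV, rfl⟩ := h
  rw [card_sum, count_sum', ← Finset.sum_add_distrib]
  simpa [mul_comm] using
    Finset.card_nsmul_le_sum Finset.univ _ 2 fun j _ => (hV j).two_le_card_add_count_zero

lemma HasFactorizationOfLength.card_add_count_zero_le [Finite G] [DecidableEq G]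
    {S : Multiset G} {k : ℕ} (h : HasFactorizationOfLength S k) (hD : 2 ≤ DavC G) :
    card S + count 0 S ≤ k * DavC G := by
  obtain ⟨U, hU, rfl⟩ := h
  rw [card_sum, count_sum', ← Finset.sum_add_distrib]
  simpa using
    Finset.sum_le_card_nsmul Finset.univ _ _ fun i _ => (hU i).card_add_count_zero_le_davC hD

end Factorization

section Elasticity

variable {G : Type*} [AddCommGroup G] [Finite G]

lemma HasFactorizationOfLength.two_mul_le_mul_davC {S : Multiset G} {k m : ℕ}
    (hk : HasFactorizationOfLength S k) (hm : HasFactorizationOfLength S m) (hD : 2 ≤ DavC G) :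
    2 * m ≤ k * DavC G := by
  classical
  exact hm.two_mul_le.trans (hk.card_add_count_zero_le hD)

lemma two_mul_rho_le (hD : 2 ≤ DavC G) (k : ℕ) : 2 * rho G k ≤ k * DavC G := by
  suffices rho G k ≤ k * DavC G / 2 by omega
  rw [rho_eq_sSup]
  refine csSup_le' ?_
  rintro m ⟨S, hk, hm⟩
  have := hk.two_mul_le_mul_davC hm hD
  omega

lemma HasFactorizationOfLength.le_rho {S : Multiset G} {k m : ℕ}
    (hk : HasFactorizationOfLength S k) (hm : HasFactorizationOfLength S m) (hD : 2 ≤ DavC G) :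
    m ≤ rho G k := by
  rw [rho_eq_sSup]
  refine le_csSup ⟨k * DavC G, ?_⟩ ⟨S, hk, hm⟩
  rintro m' ⟨S', hk', hm'⟩
  have := hk'.two_mul_le_mul_davC hm' hD
  omega

end Elasticity

theorem stmt1_general {G : Type*} [AddCommGroup G] [Fintype G]
    (hG : 3 ≤ Fintype.card G) (k : ℕ) :
    rho G (2 * k) = k * DavC G ∧
    1 + k * DavC G ≤ rho G (2 * k + 1) ∧
    rho G (2 * k + 1) ≤ k * DavC G + DavC G / 2 ∧
    (DavC G = 3 → rho G (2 * k + 1) = 3 * k + 1) := by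
  have : Nontrivial G := Fintype.one_lt_card_iff_nontrivial.mp (by omega)
  have hD : 2 ≤ DavC G := two_le_davC
  obtain ⟨W, hW, hWcard⟩ := exists_minZeroSum_card_eq_davC (G := G)
  have hW0 : ∀ x ∈ W, x ≠ 0 := by
    rintro x hx rfl
    have := congrArg card (hW.eq_singleton_zero_of_zero_mem hx)
    rw [card_singleton] at this
    omega
  have hpair : HasFactorizationOfLength (W + W.map Neg.neg) 2 :=
    hW.hasFactorizationOfLength_one.add
      (hW.map_addEquiv (AddEquiv.neg G)).hasFactorizationOfLength_one
  have hshort : HasFactorizationOfLength (k • (W + W.map Neg.neg)) (2 * k) := by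
    simpa [mul_comm] using hpair.nsmul k
  have hlong := (hasFactorizationOfLength_add_map_neg hW0).nsmul k
  have hzero := minZeroSum_singleton_zero.hasFactorizationOfLength_one (G := G)
  have hle_even := two_mul_rho_le hD (2 * k)
  have hle_odd := two_mul_rho_le hD (2 * k + 1)
  have hge_even := hshort.le_rho hlong hD
  have hge_odd := (hshort.add hzero).le_rho (hlong.add hzero) hD
  rw [hWcard] at hge_even hge_odd
  rw [mul_assoc] at hle_even
  rw [add_mul, mul_assoc, one_mul] at hle_odd
  refine ⟨by omega, by omega, by omega, fun h3 => ?_⟩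
  rw [h3] at hle_odd hge_odd
  omega

theorem stmt1 {G : Type*} [AddCommGroup G] [Fintype G]
    (hG : 3 ≤ Fintype.card G) (k : ℕ) (hk : 0 < k) :
    rho G (2 * k) = k * DavC G ∧
    1 + k * DavC G ≤ rho G (2 * k + 1) ∧
    rho G (2 * k + 1) ≤ k * DavC G + DavC G / 2 ∧
    (DavC G = 3 → rho G (2 * k + 1) = 3 * k + 1) :=
  stmt1_general hG k
end

section
/- Let G be a finite abelian group which is the internal direct sum G = G_1 ⊕ G_2 of two nontrivial subgroups. For i = 1, 2, suppose there exist minimal zero-sum sequences V_{i,1}, V_{i,2}, V_{i,3} over G_i whose product V_{i,1}·V_{i,2}·V_{i,3} admits a factorization into ρ_i minimal zero-sum sequences all of length 2. Then there exist minimal zero-sum sequences U_1, U_2, U_3 over G whose product U_1·U_2·U_3 admits a factorization into ρ_1 + ρ_2 − 2 minimal zero-sum sequences, exactly one of which has length 3 (and contains exactly one term from each of U_1, U_2, U_3) while all the others have length 2. In particular, ρ_3(G) ≥ ρ_1 + ρ_2 − 2. -/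
/-- The product `U 0 + U 1 + U 2` of three sequences admits a factorization into `m`
minimal zero-sum sequences, of which exactly `r` have length `3` and contain exactly one
term from each `U i`, while all the others have length `2`.  The map `T` records,
for each atom of the factorization, its portion coming from each `U i`. -/
def TraversalFactorization {G : Type*} [AddCommGroup G]
    (U : Fin 3 → Multiset G) (m r : ℕ) : Prop :=
  ∃ (W : Fin m → Multiset G) (T : Fin m → Fin 3 → Multiset G) (J : Finset (Fin m)),
    (∀ j, MinZeroSum (W j)) ∧
    (∀ j, W j = T j 0 + T j 1 + T j 2) ∧
    (∀ i, U i = ∑ j, T j i) ∧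
    J.card = r ∧
    (∀ j ∈ J, Multiset.card (W j) = 3 ∧ ∀ i, Multiset.card (T j i) = 1) ∧
    (∀ j ∉ J, Multiset.card (W j) = 2)

/-!
A factorization of `V₁ V₂ V₃` (atoms over `H`) into pairs `{x, -x}` can be normalized: there are
atoms `X, Y, Z` over `H` whose product still factors into the same number of pairs, two of which
are `{u, -u}` and `{v, -v}` with `u, v ∈ X`, `-u ∈ Y` and `-v ∈ Z`. If an atom `A` among the `Vᵢ`
has length at least 3, it contains no pair, so `-A` divides the product of the other two; if `-A`
meets both of them, `u` and `v` can be read off, and otherwise `-A` is one of them and the other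
is a single pair. In that case, as when all three atoms have length 2, take `A`, `-A` and `{v, -v}`.

Replacing a term `a` of an atom over `G₁` and a term `b` of an atom over `G₂` by `a + b` gives an
atom, because a zero-sum subsequence splits into zero-sum parts in `G₁` and in `G₂`. Gluing
`Y₁` to `Y₂` at `-u₁, -u₂`, `X₁` to `Z₂` at `v₁, -v₂` and `Z₁` to `X₂` at `-v₁, v₂` gives three
atoms whose product consists of the `ρ₁ + ρ₂ - 4` untouched pairs, the pair `{v₁ - v₂, v₂ - v₁}`
and the atom `{-u₁ - u₂, u₁, u₂}`, which meets each of the three atoms once.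
-/

open Multiset

namespace Multiset

variable {α : Type*}

theorem exists_eq_add_of_le_add [DecidableEq α] {u s t : Multiset α} (h : u ≤ s + t) :
    ∃ a b, a ≤ s ∧ b ≤ t ∧ u = a + b := by
  refine ⟨u ∩ s, u - u ∩ s, inter_le_right, ?_, (add_tsub_cancel_of_le inter_le_left).symm⟩
  rw [le_iff_count]
  intro x
  have hx := (le_iff_count.mp h) x
  rw [count_add] at hx
  rw [count_sub, count_inter]
  omega

theorem exists_eq_sum_of_le_sum [DecidableEq α] {ι : Type*} [DecidableEq ι] (s : Finset ι)
    {A : ι → Multiset α} {u : Multiset α} (h : u ≤ ∑ i ∈ s, A i) :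
    ∃ P : ι → Multiset α, (∀ i, P i ≤ A i) ∧ u = ∑ i ∈ s, P i := by
  induction s using Finset.induction_on generalizing u with
  | empty => exact ⟨0, fun _ => zero_le _, by simpa using h⟩
  | insert a s ha ih =>
    rw [Finset.sum_insert ha] at h
    obtain ⟨b, c, hb, hc, rfl⟩ := exists_eq_add_of_le_add h
    obtain ⟨P, hP, rfl⟩ := ih hc
    refine ⟨Function.update P a b, fun i => ?_, ?_⟩
    · rcases eq_or_ne i a with rfl | hi
      · simpa using hb
      · simpa [hi] using hP i
    · rw [Finset.sum_insert ha, Function.update_self, Finset.sum_update_of_notMem ha]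

theorem exists_matrix_of_sum_eq [DecidableEq α] {ι : Type*} [Fintype ι] [DecidableEq ι] :
    ∀ {k : ℕ} (A : ι → Multiset α) (B : Fin k → Multiset α), ∑ i, A i = ∑ j, B j →
      ∃ T : Fin k → ι → Multiset α, (∀ j, B j = ∑ i, T j i) ∧ ∀ i, A i = ∑ j, T j i
  | 0, A, B, h => by
    refine ⟨Fin.elim0, fun j => j.elim0, fun i => ?_⟩
    simp only [Finset.univ_eq_empty, Finset.sum_empty, Finset.sum_eq_zero_iff] at h ⊢
    exact h i (Finset.mem_univ i)
  | k + 1, A, B, h => by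
    rw [Fin.sum_univ_succ] at h
    obtain ⟨P, hPA, hP⟩ := exists_eq_sum_of_le_sum Finset.univ (h ▸ le_add_right _ _)
    have hrest : ∑ i, (A i - P i) = ∑ j : Fin k, B j.succ := by
      apply add_left_cancel (a := ∑ i, P i)
      rw [← Finset.sum_add_distrib, ← hP, ← h]
      exact Finset.sum_congr rfl fun i _ => add_tsub_cancel_of_le (hPA i)
    obtain ⟨T, hTB, hTA⟩ := exists_matrix_of_sum_eq _ _ hrest
    refine ⟨Fin.cons P T, Fin.cases hP hTB, fun i => ?_⟩
    rw [Fin.sum_univ_succ, Fin.cons_zero]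
    simp only [Fin.cons_succ, ← hTA i]
    exact (add_tsub_cancel_of_le (hPA i)).symm

end Multiset

theorem sum_eq_sum_of_matrix {M : Type*} [AddCommMonoid M] {m : ℕ} {U : Fin 3 → M}
    {W : Fin m → M} {T : Fin m → Fin 3 → M}
    (hW : ∀ j, W j = T j 0 + T j 1 + T j 2) (hU : ∀ i, U i = ∑ j, T j i) :
    ∑ i, U i = ∑ j, W j := by
  simp only [hU, hW]
  rw [Finset.sum_comm]
  simp [Fin.sum_univ_three]

section MinZeroSum

variable {G : Type*} [AddCommGroup G] {S T : Multiset G}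

theorem MinZeroSum.eq_zero_of_lt (hS : MinZeroSum S) (hT : T < S) (hs : T.sum = 0) : T = 0 :=
  by_contra fun h0 => hS.2.2 T hT.le h0 hT.ne hs

theorem MinZeroSum.eq_of_le (hS : MinZeroSum S) (hT : T ≤ S) (h0 : T ≠ 0) (hs : T.sum = 0) :
    T = S :=
  by_contra fun h => h0 (hS.eq_zero_of_lt (lt_of_le_of_ne hT h) hs)

theorem MinZeroSum.zero_notMem (hS : MinZeroSum S) (hc : 2 ≤ card S) : (0 : G) ∉ S := by
  intro h
  have := hS.eq_of_le (singleton_le.mpr h) (singleton_ne_zero 0) (sum_singleton 0)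
  rw [← this, card_singleton] at hc
  omega

theorem MinZeroSum.two_le_card (hS : MinZeroSum S) (h0 : (0 : G) ∉ S) : 2 ≤ card S := by
  by_contra! hc
  obtain ⟨x, rfl⟩ : ∃ x, S = {x} := card_eq_one.mp (by have := card_pos.mpr hS.1; omega)
  exact h0 (by simpa using hS.2.1.symm)

theorem MinZeroSum.map_neg (hS : MinZeroSum S) : MinZeroSum (S.map Neg.neg) := by
  refine ⟨by simpa using hS.1, by rw [sum_map_neg', hS.2.1, neg_zero], fun T hT h0 hne hs => ?_⟩
  have hT' : T.map Neg.neg ≤ S := by simpa [map_map] using map_le_map (f := Neg.neg) hT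
  refine hne ?_
  rw [← hS.eq_of_le hT' (by simpa using h0) (by rw [sum_map_neg', hs, neg_zero]), map_map]
  simp

theorem MinZeroSum.not_cons_neg_le (hS : MinZeroSum S) (hc : 3 ≤ card S) (x : G) :
    ¬ x ::ₘ {-x} ≤ S := fun h => by
  have := hS.eq_of_le h cons_ne_zero (by simp)
  rw [← this] at hc
  simp at hc

theorem minZeroSum_of_card_le_three (h0 : S ≠ 0) (hs : S.sum = 0) (hz : (0 : G) ∉ S)
    (hc : card S ≤ 3) : MinZeroSum S := by
  refine ⟨h0, hs, fun T hT hT0 hne hTs => ?_⟩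
  obtain ⟨R, rfl⟩ := Multiset.le_iff_exists_add.mp hT
  have hR0 : R ≠ 0 := fun h => hne (by rw [h, add_zero])
  rw [card_add] at hc
  have h1 := card_pos.mpr hT0
  have h2 := card_pos.mpr hR0
  obtain ⟨D, hDS, hD1, hDs⟩ : ∃ D, D ≤ T + R ∧ card D = 1 ∧ D.sum = 0 := by
    rcases (by omega : card T = 1 ∨ card R = 1) with h | h
    · exact ⟨T, hT, h, hTs⟩
    · exact ⟨R, le_add_left _ _, h, by rwa [sum_add, hTs, zero_add] at hs⟩
  obtain ⟨x, rfl⟩ := card_eq_one.mp hD1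
  rw [sum_singleton] at hDs
  exact hz (hDs ▸ singleton_le.mp hDS)

theorem MinZeroSum.exists_eq_cons_neg (hS : MinZeroSum S) (hc : card S = 2) :
    ∃ x ≠ (0 : G), S = x ::ₘ {-x} := by
  have h0 := hS.zero_notMem hc.ge
  obtain ⟨x, y, rfl⟩ := card_eq_two.mp hc
  have hy : y = -x := eq_neg_of_add_eq_zero_right (by simpa using hS.2.1)
  exact ⟨x, fun h => h0 (h ▸ mem_cons_self _ _), by rw [hy]; rfl⟩

theorem MinZeroSum.card_le_card [Fintype G] (hS : MinZeroSum S) : card S ≤ Fintype.card G := by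
  by_contra! hlt
  set l := S.toList
  have hl : l.length = card S := length_toList S
  -- two of the first `card S` prefix sums coincide
  obtain ⟨i, j, hij, heq⟩ := Fintype.exists_ne_map_eq_of_card_lt
    (fun i : Fin (card S) => (l.take i).sum) (by simpa using hlt)
  wlog hlt' : i < j generalizing i j
  · exact this j i hij.symm heq.symm (lt_of_le_of_ne (not_lt.mp hlt') hij.symm)
  set T := (l.drop i).take (j - i)
  have hT : T.length = j - i := by simp [T, hl]
  have hTsum : T.sum = 0 := by
    have : l.take j = l.take i ++ T := by
      rw [← List.take_add]
      congr 1
      omega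
    simpa [this] using heq
  refine hS.2.2 T ?_ ?_ ?_ (by simpa using hTsum)
  · rw [← coe_toList S]
    exact coe_le.mpr ((List.take_sublist _ _).trans (List.drop_sublist _ _)).subperm
  · intro h
    have := congrArg card h
    simp [hT] at this
    omega
  · intro h
    have := congrArg card h
    simp only [coe_card, hT] at this
    omega

theorem le_rho_of_sum_eq [Fintype G] {k m : ℕ} (U : Fin k → Multiset G) (V : Fin m → Multiset G)
    (hU : ∀ i, MinZeroSum (U i)) (hV : ∀ j, MinZeroSum (V j)) (h : ∑ i, U i = ∑ j, V j) :
    m ≤ rho G k := by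
  refine le_csSup ⟨k * Fintype.card G, ?_⟩ ⟨U, V, hU, hV, h⟩
  rintro m' ⟨U', V', hU', hV', h'⟩
  calc m' = ∑ _j : Fin m', 1 := by simp
    _ ≤ ∑ j, card (V' j) := Finset.sum_le_sum fun j _ => card_pos.mpr (hV' j).1
    _ = ∑ i, card (U' i) := by rw [← card_sum, ← h', card_sum]
    _ ≤ ∑ _i : Fin k, Fintype.card G := Finset.sum_le_sum fun i _ => (hU' i).card_le_card
    _ = k * Fintype.card G := by simp

theorem minZeroSum_cons_add_of_disjoint [DecidableEq G] {H₁ H₂ : AddSubgroup G}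
    (hd : Disjoint H₁ H₂) {a b : G} {A B : Multiset G}
    (hA : MinZeroSum (a ::ₘ A)) (hB : MinZeroSum (b ::ₘ B))
    (hAH : ∀ x ∈ a ::ₘ A, x ∈ H₁) (hBH : ∀ x ∈ b ::ₘ B, x ∈ H₂) :
    MinZeroSum ((a + b) ::ₘ (A + B)) := by
  have hsplit : ∀ {T₁ T₂}, T₁ ≤ a ::ₘ A → T₂ ≤ b ::ₘ B → T₁.sum + T₂.sum = 0 →
      T₁.sum = 0 ∧ T₂.sum = 0 := fun h₁ h₂ =>
    AddSubgroup.disjoint_iff_add_eq_zero.mp hd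
      (H₁.multiset_sum_mem _ fun x hx => hAH x (mem_of_le h₁ hx))
      (H₂.multiset_sum_mem _ fun x hx => hBH x (mem_of_le h₂ hx))
  have hsum : ∀ T₁ T₂ : Multiset G,
      ((a + b) ::ₘ (T₁ + T₂)).sum = (a ::ₘ T₁).sum + (b ::ₘ T₂).sum := by
    intro T₁ T₂
    simp only [sum_cons, sum_add]
    abel
  refine ⟨cons_ne_zero, by rw [hsum, hA.2.1, hB.2.1, add_zero], fun T hT hT0 hne hs => ?_⟩
  by_cases hab : a + b ∈ T
  · obtain ⟨T', rfl⟩ := exists_cons_of_mem hab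
    obtain ⟨T₁, T₂, h₁, h₂, rfl⟩ := exists_eq_add_of_le_add ((cons_le_cons_iff _).mp hT)
    rw [hsum] at hs
    obtain ⟨hs₁, hs₂⟩ := hsplit (cons_le_cons a h₁) (cons_le_cons b h₂) hs
    have e₁ := hA.eq_of_le (cons_le_cons a h₁) cons_ne_zero hs₁
    have e₂ := hB.eq_of_le (cons_le_cons b h₂) cons_ne_zero hs₂
    rw [cons_inj_right] at e₁ e₂
    exact hne (by rw [e₁, e₂])
  · obtain ⟨T₁, T₂, h₁, h₂, rfl⟩ := exists_eq_add_of_le_add ((le_cons_of_notMem hab).mp hT)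
    rw [sum_add] at hs
    obtain ⟨hs₁, hs₂⟩ :=
      hsplit (h₁.trans (le_cons_self A a)) (h₂.trans (le_cons_self B b)) hs
    have e₁ := hA.eq_zero_of_lt (h₁.trans_lt (lt_cons_self A a)) hs₁
    have e₂ := hB.eq_zero_of_lt (h₂.trans_lt (lt_cons_self B b)) hs₂
    exact hT0 (by rw [e₁, e₂, add_zero])

end MinZeroSum

section PairProduct

variable {G : Type*} [AddCommGroup G]

/-- `S` is the product of the `n` atoms `{x, -x}`, `x ∈ L`, of length two. -/
def IsPairProduct (S : Multiset G) (n : ℕ) : Prop :=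
  ∃ L : Multiset G, card L = n ∧ (0 : G) ∉ L ∧ S = L + L.map Neg.neg

theorem cons_add_map_neg_cons (y : G) (L : Multiset G) :
    y ::ₘ L + (y ::ₘ L).map Neg.neg = y ::ₘ -y ::ₘ (L + L.map Neg.neg) := by
  simp only [map_cons, cons_add, add_cons]
  exact cons_swap _ _ _

theorem sum_cons_neg_eq_map_add {m : ℕ} (x : Fin m → G) :
    ∑ j, (x j ::ₘ {-x j}) = Finset.univ.val.map x + (Finset.univ.val.map x).map Neg.neg := by
  have key : ∀ f : Fin m → G, ∑ j, ({f j} : Multiset G) = Finset.univ.val.map f := fun f => by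
    rw [Finset.sum_eq_multiset_sum, ← sum_map_singleton (Finset.univ.val.map f), map_map]
    rfl
  simp only [← singleton_add, Finset.sum_add_distrib, key, map_map]
  rfl

namespace IsPairProduct

variable {S R : Multiset G} {n : ℕ}

theorem card_eq (h : IsPairProduct S n) : card S = 2 * n := by
  obtain ⟨L, rfl, -, rfl⟩ := h
  simp [two_mul]

theorem zero_notMem (h : IsPairProduct S n) : (0 : G) ∉ S := by
  obtain ⟨L, -, hL, rfl⟩ := h
  simpa [mem_add, mem_map] using hL

theorem add {m : ℕ} (hS : IsPairProduct S m) (hR : IsPairProduct R n) :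
    IsPairProduct (S + R) (m + n) := by
  obtain ⟨L, rfl, hL, rfl⟩ := hS
  obtain ⟨K, rfl, hK, rfl⟩ := hR
  refine ⟨L + K, card_add L K, by simp [hL, hK], ?_⟩
  rw [map_add]
  abel

theorem cons_cons {x : G} (hx : x ≠ 0) (h : IsPairProduct S n) :
    IsPairProduct (x ::ₘ -x ::ₘ S) (n + 1) := by
  obtain ⟨L, rfl, hL, rfl⟩ := h
  exact ⟨x ::ₘ L, card_cons x L, by simp [hL, hx.symm], (cons_add_map_neg_cons x L).symm⟩

theorem of_cons {x : G} (h : IsPairProduct (x ::ₘ S) n) :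
    ∃ S' k, S = -x ::ₘ S' ∧ n = k + 1 ∧ IsPairProduct S' k := by
  obtain ⟨L, rfl, hL, hS⟩ := h
  obtain ⟨y, hyL, hyx⟩ : ∃ y ∈ L, x ::ₘ -x ::ₘ 0 = y ::ₘ -y ::ₘ 0 := by
    have hx : x ∈ L + L.map Neg.neg := hS ▸ mem_cons_self x S
    rcases mem_add.mp hx with hx | hx
    · exact ⟨x, hx, rfl⟩
    · obtain ⟨y, hy, rfl⟩ := mem_map.mp hx
      exact ⟨y, hy, by rw [neg_neg]; exact cons_swap _ _ _⟩
  obtain ⟨L', rfl⟩ := exists_cons_of_mem hyL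
  refine ⟨L' + L'.map Neg.neg, card L', ?_, card_cons y L', L', rfl,
    fun h0 => hL (mem_cons_of_mem h0), rfl⟩
  have hswap := congrArg (· + (L' + L'.map Neg.neg)) hyx
  simp only [cons_add, zero_add] at hswap
  rw [← cons_inj_right x, hS, cons_add_map_neg_cons, ← hswap]

theorem of_cons_cons {x : G} (h : IsPairProduct (x ::ₘ -x ::ₘ S) n) :
    ∃ k, n = k + 1 ∧ IsPairProduct S k := by
  obtain ⟨S', k, hS', hn, hk⟩ := h.of_cons
  exact ⟨k, hn, (cons_inj_right _).mp hS' ▸ hk⟩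

theorem exists_eq_map_neg_add {A : Multiset G} (h : IsPairProduct (A + R) n)
    (hA : ∀ x, ¬ x ::ₘ {-x} ≤ A) :
    ∃ R' k, R = A.map Neg.neg + R' ∧ n = card A + k ∧ IsPairProduct R' k := by
  induction A using Multiset.induction_on generalizing R n with
  | empty => exact ⟨R, n, by simp, by simp, by simpa using h⟩
  | cons w A ih =>
    rw [cons_add] at h
    obtain ⟨S', k, hS', rfl, hk⟩ := h.of_cons
    have hwA : -w ∉ A := fun hw => hA w (cons_le_cons w (singleton_le.mpr hw))
    obtain ⟨R₁, rfl⟩ :=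
      exists_cons_of_mem ((mem_add.mp (hS' ▸ mem_cons_self _ _)).resolve_left hwA)
    rw [add_cons, cons_inj_right] at hS'
    obtain ⟨R', k', rfl, rfl, hR'⟩ :=
      ih (hS' ▸ hk) fun x hx => hA x (hx.trans (le_cons_self A w))
    exact ⟨R', k', by rw [map_cons, cons_add], by rw [card_cons]; omega, hR'⟩

theorem eq_one_of_minZeroSum (hS : MinZeroSum S) (h : IsPairProduct S n) : n = 1 := by
  obtain ⟨L, rfl, -, rfl⟩ := h
  obtain ⟨y, hy⟩ := exists_mem_of_ne_zero fun h0 : L = 0 => hS.1 (by simp [h0])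
  obtain ⟨L', rfl⟩ := exists_cons_of_mem hy
  rw [cons_add_map_neg_cons] at hS
  have := hS.eq_of_le (cons_le_cons y (cons_le_cons (-y) (zero_le _))) cons_ne_zero (by simp)
  rw [cons_inj_right, cons_inj_right, eq_comm, add_eq_zero] at this
  rw [card_cons, card_eq_zero.mpr this.1]

end IsPairProduct

end PairProduct

section PairedAtoms

variable {G : Type*} [AddCommGroup G]

/-- The normal form above; `X`, `Y`, `Z` are what is left of the three atoms after removing
`v, u`, `-u` and `-v`. -/
structure PairedAtoms (H : AddSubgroup G) (m : ℕ) where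
  u : G
  v : G
  X : Multiset G
  Y : Multiset G
  Z : Multiset G
  minZeroSum_X : MinZeroSum (v ::ₘ u ::ₘ X)
  minZeroSum_Y : MinZeroSum (-u ::ₘ Y)
  minZeroSum_Z : MinZeroSum (-v ::ₘ Z)
  mem_X : ∀ x ∈ v ::ₘ u ::ₘ X, x ∈ H
  mem_Y : ∀ x ∈ -u ::ₘ Y, x ∈ H
  mem_Z : ∀ x ∈ -v ::ₘ Z, x ∈ H
  isPairProduct : IsPairProduct (X + Y + Z) m

variable {H : AddSubgroup G}

theorem nonempty_pairedAtoms_of_minZeroSum {A : Multiset G} (hA : MinZeroSum A)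
    (hAH : ∀ x ∈ A, x ∈ H) {m : ℕ} (hc : card A = m + 2) :
    Nonempty (PairedAtoms H (m + 1)) := by
  have h0 := hA.zero_notMem (by omega)
  obtain ⟨v, A', rfl, hc'⟩ := card_eq_succ_iff.mp hc
  obtain ⟨u, X, rfl, rfl⟩ := card_eq_succ_iff.mp hc'
  have hv : v ≠ 0 := fun h => h0 (h ▸ mem_cons_self _ _)
  have hY : -u ::ₘ (v ::ₘ X).map Neg.neg = (v ::ₘ u ::ₘ X).map Neg.neg := by
    simp only [map_cons]
    exact cons_swap _ _ _
  refine ⟨⟨u, v, X, (v ::ₘ X).map Neg.neg, {v}, hA, hY ▸ hA.map_neg, ?_, hAH, ?_, ?_, ?_⟩⟩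
  · refine minZeroSum_of_card_le_three cons_ne_zero (by simp) ?_ (by simp)
    simpa [eq_comm] using hv
  · rw [hY]
    intro x hx
    obtain ⟨y, hy, rfl⟩ := mem_map.mp hx
    exact neg_mem (hAH y hy)
  · intro x hx
    simp only [mem_cons, mem_singleton] at hx
    rcases hx with rfl | rfl <;> simp [hAH]
  · refine ⟨v ::ₘ X, card_cons v X,
      fun h => h0 (mem_of_le (cons_le_cons v (le_cons_self X u)) h), ?_⟩
    rw [← singleton_add v X]
    abel

theorem exists_pairedAtoms_of_cons {u v : G} {X Y Z : Multiset G}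
    (hX : MinZeroSum (v ::ₘ u ::ₘ X)) (hY : MinZeroSum (-u ::ₘ Y)) (hZ : MinZeroSum (-v ::ₘ Z))
    (hXH : ∀ x ∈ v ::ₘ u ::ₘ X, x ∈ H) (hYH : ∀ x ∈ -u ::ₘ Y, x ∈ H)
    (hZH : ∀ x ∈ -v ::ₘ Z, x ∈ H) {n : ℕ}
    (h : IsPairProduct (v ::ₘ u ::ₘ X + -u ::ₘ Y + -v ::ₘ Z) n) :
    ∃ m, n = m + 2 ∧ Nonempty (PairedAtoms H m) := by
  have hperm : v ::ₘ u ::ₘ X + -u ::ₘ Y + -v ::ₘ Z = v ::ₘ -v ::ₘ u ::ₘ -u ::ₘ (X + Y + Z) := by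
    simp only [← singleton_add]
    abel
  rw [hperm] at h
  obtain ⟨k, rfl, hk⟩ := h.of_cons_cons
  obtain ⟨m, rfl, hm⟩ := hk.of_cons_cons
  exact ⟨m, rfl, ⟨⟨u, v, X, Y, Z, hX, hY, hZ, hXH, hYH, hZH, hm⟩⟩⟩

theorem exists_pairedAtoms_of_three_le_card [DecidableEq G] {A B C : Multiset G}
    (hA : MinZeroSum A) (hB : MinZeroSum B) (hC : MinZeroSum C)
    (hAH : ∀ x ∈ A, x ∈ H) (hBH : ∀ x ∈ B, x ∈ H) (hCH : ∀ x ∈ C, x ∈ H) {n : ℕ}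
    (h : IsPairProduct (A + B + C) n) (hc : 3 ≤ card A) :
    ∃ m, n = m + 2 ∧ Nonempty (PairedAtoms H m) := by
  obtain ⟨R, k, hBC, rfl, hR⟩ :=
    (add_assoc A B C ▸ h).exists_eq_map_neg_add (hA.not_cons_neg_le hc)
  have of_le_neg : ∀ D D', B + C = D + D' → MinZeroSum D → MinZeroSum D' →
      A.map Neg.neg ≤ D → ∃ m, card A + k = m + 2 ∧ Nonempty (PairedAtoms H m) := by
    intro D D' hDD' hD hD' hAD
    rw [hDD', hD.eq_of_le hAD (by simpa using hA.1) (by rw [sum_map_neg', hA.2.1, neg_zero]),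
      add_right_inj] at hBC
    obtain rfl := hR.eq_one_of_minZeroSum (hBC ▸ hD')
    exact ⟨card A - 2 + 1, by omega, nonempty_pairedAtoms_of_minZeroSum hA hAH (by omega)⟩
  obtain ⟨B₀, C₀, hB₀, hC₀, hBC₀⟩ :=
    exists_eq_add_of_le_add (hBC ▸ le_add_right _ _ : A.map Neg.neg ≤ B + C)
  rcases eq_or_ne C₀ 0 with rfl | hC₀0
  · exact of_le_neg B C rfl hB hC (by rwa [hBC₀, add_zero])
  rcases eq_or_ne B₀ 0 with rfl | hB₀0
  · exact of_le_neg C B (add_comm B C) hC hB (by rwa [hBC₀, zero_add])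
  obtain ⟨b, hb⟩ := exists_mem_of_ne_zero hB₀0
  obtain ⟨c, hcC₀⟩ := exists_mem_of_ne_zero hC₀0
  obtain ⟨u, rfl⟩ : ∃ u, b = -u := ⟨-b, (neg_neg b).symm⟩
  obtain ⟨v, rfl⟩ : ∃ v, c = -v := ⟨-c, (neg_neg c).symm⟩
  obtain ⟨B₁, rfl⟩ := exists_cons_of_mem hb
  obtain ⟨C₁, rfl⟩ := exists_cons_of_mem hcC₀
  obtain ⟨Y, rfl⟩ := exists_cons_of_mem (mem_of_le hB₀ (mem_cons_self _ _))
  obtain ⟨Z, rfl⟩ := exists_cons_of_mem (mem_of_le hC₀ (mem_cons_self _ _))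
  have hA' : A = v ::ₘ u ::ₘ (B₁ + C₁).map Neg.neg := by
    have := congrArg (map Neg.neg) hBC₀
    simp only [map_map, Function.comp_def, neg_neg, map_id', Multiset.map_add, map_cons] at this
    rw [this, cons_add, add_cons, cons_swap, Multiset.map_add]
  subst hA'
  exact exists_pairedAtoms_of_cons hA hB hC hAH hBH hCH h

theorem exists_pairedAtoms [DecidableEq G] {V : Fin 3 → Multiset G} (hV : ∀ i, MinZeroSum (V i))
    (hVH : ∀ i, ∀ x ∈ V i, x ∈ H) {n : ℕ} (h : IsPairProduct (∑ i, V i) n) :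
    ∃ m, n = m + 2 ∧ Nonempty (PairedAtoms H m) := by
  have h2 : ∀ i, 2 ≤ card (V i) := fun i => (hV i).two_le_card fun h0 =>
    h.zero_notMem (mem_of_le (Finset.single_le_sum (fun j _ => zero_le (V j))
      (Finset.mem_univ i)) h0)
  have hcard := h.card_eq
  rw [Fin.sum_univ_three] at h hcard
  rw [card_add, card_add] at hcard
  by_cases h0 : 3 ≤ card (V 0)
  · exact exists_pairedAtoms_of_three_le_card (hV 0) (hV 1) (hV 2) (hVH 0) (hVH 1) (hVH 2) h h0
  by_cases h1 : 3 ≤ card (V 1)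
  · exact exists_pairedAtoms_of_three_le_card (hV 1) (hV 0) (hV 2) (hVH 1) (hVH 0) (hVH 2)
      (by convert h using 1; abel) h1
  by_cases h2' : 3 ≤ card (V 2)
  · exact exists_pairedAtoms_of_three_le_card (hV 2) (hV 0) (hV 1) (hVH 2) (hVH 0) (hVH 1)
      (by convert h using 1; abel) h2'
  have := h2 0
  have := h2 1
  have := h2 2
  exact ⟨1, by omega, nonempty_pairedAtoms_of_minZeroSum (hV 0) (hVH 0) (by omega)⟩

end PairedAtoms

section Traversal

variable {G : Type*} [AddCommGroup G]

namespace TraversalFactorization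

variable {U : Fin 3 → Multiset G} {m r : ℕ}

theorem isPairProduct (h : TraversalFactorization U m 0) : IsPairProduct (∑ i, U i) m := by
  obtain ⟨W, T, J, hWa, hWT, hUT, hJ, -, hJ2⟩ := h
  obtain rfl := Finset.card_eq_zero.mp hJ
  choose x hx0 hx using fun j => (hWa j).exists_eq_cons_neg (hJ2 j (Finset.notMem_empty j))
  refine ⟨Finset.univ.val.map x, by simp, by simpa [eq_comm] using hx0, ?_⟩
  rw [sum_eq_sum_of_matrix hWT hUT]
  simp only [hx, sum_cons_neg_eq_map_add]

theorem of_isPairProduct [DecidableEq G] (h : IsPairProduct (∑ i, U i) m) :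
    TraversalFactorization U m 0 := by
  obtain ⟨L, hL, h0, hU⟩ := h
  obtain ⟨x, rfl⟩ : ∃ x : Fin m → G, L = Finset.univ.val.map x := by
    obtain ⟨l, rfl⟩ : ∃ l : List G, (l : Multiset G) = L := Quot.exists_rep L
    rw [coe_card] at hL
    subst hL
    exact ⟨l.get, by rw [Fin.univ_val_map, List.ofFn_get]⟩
  obtain ⟨T, hTW, hTU⟩ := exists_matrix_of_sum_eq U (fun j => x j ::ₘ {-x j}) (by
    rw [hU, sum_cons_neg_eq_map_add])
  refine ⟨fun j => x j ::ₘ {-x j}, T, ∅, fun j => ?_,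
    fun j => (hTW j).trans (Fin.sum_univ_three _), hTU, rfl, by simp, fun j _ => by simp⟩
  have hx : x j ≠ 0 := fun h => h0 (mem_map.mpr ⟨j, Finset.mem_univ_val j, h⟩)
  exact minZeroSum_of_card_le_three cons_ne_zero (by simp) (by simpa [eq_comm] using hx)
    (by simp)

theorem cons {t : Fin 3 → G} (ht : MinZeroSum (t 0 ::ₘ t 1 ::ₘ {t 2}))
    (h : TraversalFactorization U m r) :
    TraversalFactorization (fun i => t i ::ₘ U i) (m + 1) (r + 1) := by
  obtain ⟨W, T, J, hWa, hWT, hUT, hJ, hJ3, hJ2⟩ := h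
  refine ⟨Fin.cons (t 0 ::ₘ t 1 ::ₘ {t 2}) W, Fin.cons (fun i => {t i}) T,
    Finset.cons 0 (J.map (Fin.succEmb m)) (by simp), Fin.cases ht hWa,
    Fin.cases (by simp [← singleton_add, add_assoc]) hWT, fun i => ?_, by simp [hJ], ?_, ?_⟩
  · rw [Fin.sum_univ_succ]
    simp [hUT i, singleton_add]
  · intro j hj
    cases j using Fin.cases with
    | zero => simp
    | succ j => simpa using hJ3 j (by simpa using hj)
  · intro j hj
    cases j using Fin.cases with
    | zero => simp at hj
    | succ j => simpa using hJ2 j (by simpa using hj)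

theorem le_rho [Fintype G] (hU : ∀ i, MinZeroSum (U i)) (h : TraversalFactorization U m r) :
    m ≤ rho G 3 := by
  obtain ⟨W, T, J, hWa, hWT, hUT, -⟩ := h
  exact le_rho_of_sum_eq U W hU hWa (sum_eq_sum_of_matrix hWT hUT)

end TraversalFactorization

theorem PairedAtoms.exists_traversalFactorization [DecidableEq G] {H₁ H₂ : AddSubgroup G}
    {m₁ m₂ : ℕ} (P : PairedAtoms H₁ m₁) (Q : PairedAtoms H₂ m₂) (hd : Disjoint H₁ H₂) :
    ∃ U : Fin 3 → Multiset G, (∀ i, MinZeroSum (U i)) ∧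
      TraversalFactorization U (m₁ + m₂ + 2) 1 := by
  have hu₁ : P.u ≠ 0 := fun h => P.minZeroSum_X.zero_notMem (by simp) (by simp [h])
  have hu₂ : Q.u ≠ 0 := fun h => Q.minZeroSum_X.zero_notMem (by simp) (by simp [h])
  have hv₁ : P.v ≠ 0 := fun h => P.minZeroSum_X.zero_notMem (by simp) (by simp [h])
  have hne : ∀ {x y}, x ∈ H₁ → y ∈ H₂ → x ≠ 0 → x + y ≠ 0 := fun hx hy hx0 h =>
    hx0 (AddSubgroup.disjoint_iff_add_eq_zero.mp hd hx hy h).1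
  set w := P.v + -Q.v
  have hw : w ≠ 0 :=
    hne (P.mem_X _ (mem_cons_self _ _)) (neg_mem (Q.mem_X _ (mem_cons_self _ _))) hv₁
  have ht : -P.u + -Q.u ≠ 0 := hne (P.mem_Y _ (mem_cons_self _ _))
    (Q.mem_Y _ (mem_cons_self _ _)) (neg_ne_zero.mpr hu₁)
  let t : Fin 3 → G := ![-P.u + -Q.u, P.u, Q.u]
  let U : Fin 3 → Multiset G := ![P.Y + Q.Y, w ::ₘ (P.X + Q.Z), -w ::ₘ (P.Z + Q.X)]
  refine ⟨fun i => t i ::ₘ U i, fun i => ?_,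
    TraversalFactorization.cons ?_ (TraversalFactorization.of_isPairProduct ?_)⟩
  · fin_cases i
    · exact minZeroSum_cons_add_of_disjoint hd P.minZeroSum_Y Q.minZeroSum_Y P.mem_Y Q.mem_Y
    · have := minZeroSum_cons_add_of_disjoint hd P.minZeroSum_X Q.minZeroSum_Z P.mem_X Q.mem_Z
      rwa [cons_add, cons_swap] at this
    · have := minZeroSum_cons_add_of_disjoint hd P.minZeroSum_Z Q.minZeroSum_X P.mem_Z Q.mem_X
      rwa [add_cons, cons_swap, show -P.v + Q.v = -w by simp only [w]; abel] at this
  · refine minZeroSum_of_card_le_three cons_ne_zero (by simp [t]; abel) ?_ (by simp)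
    simp [t, eq_comm, ht, hu₁, hu₂]
  · rw [Fin.sum_univ_three]
    convert (P.isPairProduct.add Q.isPairProduct).cons_cons hw using 1
    show P.Y + Q.Y + w ::ₘ (P.X + Q.Z) + -w ::ₘ (P.Z + Q.X) = _
    simp only [← singleton_add]
    abel

end Traversal

theorem stmt15_general {G : Type*} [AddCommGroup G] [Fintype G]
    (G₁ G₂ : AddSubgroup G)
    (hcompl : IsCompl G₁ G₂)
    (V₁ V₂ : Fin 3 → Multiset G) (ρ₁ ρ₂ : ℕ)
    (hV₁mem : ∀ i, ∀ x ∈ V₁ i, x ∈ G₁) (hV₂mem : ∀ i, ∀ x ∈ V₂ i, x ∈ G₂)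
    (hV₁ : ∀ i, MinZeroSum (V₁ i)) (hV₂ : ∀ i, MinZeroSum (V₂ i))
    (hf₁ : TraversalFactorization V₁ ρ₁ 0)
    (hf₂ : TraversalFactorization V₂ ρ₂ 0) :
    (∃ U : Fin 3 → Multiset G, (∀ i, MinZeroSum (U i)) ∧
      TraversalFactorization U (ρ₁ + ρ₂ - 2) 1) ∧
    ρ₁ + ρ₂ - 2 ≤ rho G 3 := by
  classical
  obtain ⟨m₁, rfl, ⟨P⟩⟩ := exists_pairedAtoms hV₁ hV₁mem hf₁.isPairProduct
  obtain ⟨m₂, rfl, ⟨Q⟩⟩ := exists_pairedAtoms hV₂ hV₂mem hf₂.isPairProduct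
  obtain ⟨U, hU, hf⟩ := P.exists_traversalFactorization Q hcompl.disjoint
  rw [show m₁ + 2 + (m₂ + 2) - 2 = m₁ + m₂ + 2 by omega]
  exact ⟨⟨U, hU, hf⟩, hf.le_rho hU⟩

theorem stmt15 {G : Type*} [AddCommGroup G] [Fintype G]
    (G₁ G₂ : AddSubgroup G) (h1 : G₁ ≠ ⊥) (h2 : G₂ ≠ ⊥)
    (hcompl : IsCompl G₁ G₂)
    (V₁ V₂ : Fin 3 → Multiset G) (ρ₁ ρ₂ : ℕ)
    (hV₁mem : ∀ i, ∀ x ∈ V₁ i, x ∈ G₁) (hV₂mem : ∀ i, ∀ x ∈ V₂ i, x ∈ G₂)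
    (hV₁ : ∀ i, MinZeroSum (V₁ i)) (hV₂ : ∀ i, MinZeroSum (V₂ i))
    (hf₁ : TraversalFactorization V₁ ρ₁ 0)
    (hf₂ : TraversalFactorization V₂ ρ₂ 0) :
    (∃ U : Fin 3 → Multiset G, (∀ i, MinZeroSum (U i)) ∧
      TraversalFactorization U (ρ₁ + ρ₂ - 2) 1) ∧
    ρ₁ + ρ₂ - 2 ≤ rho G 3 :=
  stmt15_general G₁ G₂ hcompl V₁ V₂ ρ₁ ρ₂ hV₁mem hV₂mem hV₁ hV₂ hf₁ hf₂
end
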